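/- Let B be a unital K-algebra with an involution σ and q∈K nonzero. Then the linear map P : C(K,q)⊗B → B⊗C(K,q) defined by P(1⊗b) = b⊗1 and P(v⊗b) = σ(b)⊗v satisfies the mirror conditions (aatm1)–(aatm3) with C = B, D = C(K,q), and the linear map a+bv ↦ a⊗1 + b⊗v is an isomorphism of unital algebras from the algebra B̲(q) onto B⊗̲_P C(K,q). -/

import Mathlib

/-!
`C(K,q)` has the `K`-basis `1, v` with `v * v = q • 1`, so `B ⊗ C(K,q) ≅ B × B` via
`a ⊗ 1 + b ⊗ v ↔ (a, b)`, and every identity that is linear in an argument from `C(K,q)`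
need only be checked at `1` and `v`. On pure tensors the two mirror operators reduce to one-sided
multiplications (`mirrorPc_tmul`, `mirrorPd_tmul`); then (aatm2) is the anti-multiplicativity of
`σ`, and (aatm3) at `d = d' = v` is `σ ∘ σ = id` together with `v * v = q • 1`.
-/

open TensorProduct LinearMap

section MirrorPreamble

variable (K : Type*) [Field K]
variable (C : Type*) [NonAssocRing C] [Module K C] [SMulCommClass K C C] [IsScalarTower K C C]
variable (D : Type*) [NonAssocRing D] [Module K D] [SMulCommClass K D D] [IsScalarTower K D D]

/-- Sweedler helper: sends `Σ cP ⊗ dP` in `C ⊗ D` to `Σ (c'_p * cP) ⊗ (dP)_p`,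
where `P((dP) ⊗ c') = c'_p ⊗ (dP)_p`. -/
noncomputable def mirrorPc (P : D ⊗[K] C →ₗ[K] C ⊗[K] D) (c' : C) :
    C ⊗[K] D →ₗ[K] C ⊗[K] D :=
  (LinearMap.rTensor D ((LinearMap.mul' K C) ∘ₗ (TensorProduct.comm K C C).toLinearMap)) ∘ₗ
    (TensorProduct.assoc K C C D).symm.toLinearMap ∘ₗ
    (LinearMap.lTensor C (P ∘ₗ (TensorProduct.mk K D C).flip c'))

/-- Sweedler helper: sends `Σ cP ⊗ d'P` in `C ⊗ D` to `Σ (cP)_p ⊗ (d_p * d'P)`,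
where `P(d ⊗ cP) = (cP)_p ⊗ d_p`. -/
noncomputable def mirrorPd (P : D ⊗[K] C →ₗ[K] C ⊗[K] D) (d : D) :
    C ⊗[K] D →ₗ[K] C ⊗[K] D :=
  (LinearMap.lTensor C (LinearMap.mul' K D)) ∘ₗ
    (TensorProduct.assoc K C D D).toLinearMap ∘ₗ
    (LinearMap.rTensor D (P ∘ₗ (TensorProduct.mk K D C) d))

/-- `P : D ⊗ C → C ⊗ D` satisfies the mirror conditions (aatm1)–(aatm3) w.r.t. the
decomposition `D = K·1_D ⊕ D₀`. -/
def IsMirrorTwistingMap (D₀ : Submodule K D) (P : D ⊗[K] C →ₗ[K] C ⊗[K] D) : Prop :=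
  (∀ c : C, P ((1 : D) ⊗ₜ[K] c) = c ⊗ₜ[K] (1 : D)) ∧
  (∀ d : D, P (d ⊗ₜ[K] (1 : C)) = (1 : C) ⊗ₜ[K] d) ∧
  (∀ d ∈ D₀, ∀ c c' : C, P (d ⊗ₜ[K] (c * c')) = mirrorPc K C D P c' (P (d ⊗ₜ[K] c))) ∧
  (∀ (c : C) (d d' : D), P ((d * d') ⊗ₜ[K] c) = mirrorPd K C D P d (P (d' ⊗ₜ[K] c)))

/-- `m` is the multiplication of the mirror product `C ⊗̲_P D`:
`(c⊗d)(c'⊗1) = c c'_P ⊗ d_P` and, for `d' ∈ D₀`, `(c⊗d)(c'⊗d') = c'_P c ⊗ d_P d'`. -/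
def IsMirrorMul (D₀ : Submodule K D) (P : D ⊗[K] C →ₗ[K] C ⊗[K] D)
    (m : C ⊗[K] D →ₗ[K] C ⊗[K] D →ₗ[K] C ⊗[K] D) : Prop :=
  (∀ (c : C) (d : D) (c' : C),
      m (c ⊗ₜ[K] d) (c' ⊗ₜ[K] (1 : D)) =
        (LinearMap.rTensor D (LinearMap.mulLeft K c)) (P (d ⊗ₜ[K] c'))) ∧
  (∀ d' ∈ D₀, ∀ (c : C) (d : D) (c' : C),
      m (c ⊗ₜ[K] d) (c' ⊗ₜ[K] d') =
        (TensorProduct.map (LinearMap.mulRight K c) (LinearMap.mulRight K d'))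
          (P (d ⊗ₜ[K] c')))

end MirrorPreamble

/-- The multiplication of the algebra `B̲(q)`, on `B ⊕ B` with `a + bv ↔ (a, b)`:
`(a+bv)(c+dv) = (ac + qσ(d)b) + (bσ(c) + da)v`. -/
def uMul (K B : Type*) [Field K] [NonAssocRing B] [Module K B]
    (σ : B →ₗ[K] B) (q : K) : B × B → B × B → B × B :=
  fun x y => (x.1 * y.1 + q • (σ y.2 * x.2), x.2 * σ y.1 + y.2 * x.1)

/-- The linear map `B̲(q) → B ⊗ C(K,q)`, `a + bv ↦ a ⊗ 1 + b ⊗ v`. -/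
noncomputable def uToTensor (K B : Type*) [Field K] [NonAssocRing B] [Module K B]
    (q : K) :
    B × B →ₗ[K] B ⊗[K] (AdjoinRoot (Polynomial.X ^ 2 - Polynomial.C q)) :=
  ((TensorProduct.mk K B (AdjoinRoot (Polynomial.X ^ 2 - Polynomial.C q))).flip 1) ∘ₗ
      (LinearMap.fst K B B) +
  ((TensorProduct.mk K B (AdjoinRoot (Polynomial.X ^ 2 - Polynomial.C q))).flip
      (AdjoinRoot.root (Polynomial.X ^ 2 - Polynomial.C q))) ∘ₗ (LinearMap.snd K B B)

section MirrorMaps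

variable {K C D : Type*} [Field K] [NonAssocRing C] [Module K C] [NonAssocRing D] [Module K D]

lemma mirrorPc_tmul [SMulCommClass K C C] [IsScalarTower K C C] (P : D ⊗[K] C →ₗ[K] C ⊗[K] D)
    (c' x : C) (e : D) :
    mirrorPc K C D P c' (x ⊗ₜ[K] e) = rTensor D (mulRight K x) (P (e ⊗ₜ[K] c')) := by
  simp only [mirrorPc, comp_apply, LinearEquiv.coe_coe, lTensor_tmul, flip_apply, mk_apply]
  induction P (e ⊗ₜ[K] c') using TensorProduct.induction_on with
  | zero => simp
  | tmul u w => simp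
  | add t₁ t₂ h₁ h₂ => simp only [tmul_add, map_add, h₁, h₂]

lemma mirrorPd_tmul [SMulCommClass K D D] [IsScalarTower K D D] (P : D ⊗[K] C →ₗ[K] C ⊗[K] D)
    (d : D) (c : C) (e : D) :
    mirrorPd K C D P d (c ⊗ₜ[K] e) = lTensor C (mulRight K e) (P (d ⊗ₜ[K] c)) := by
  simp only [mirrorPd, comp_apply, LinearEquiv.coe_coe, rTensor_tmul, mk_apply]
  induction P (d ⊗ₜ[K] c) using TensorProduct.induction_on with
  | zero => simp
  | tmul u w => simp
  | add t₁ t₂ h₁ h₂ => simp only [add_tmul, map_add, h₁, h₂]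

end MirrorMaps

section QuadraticExtension

open Polynomial

variable {K : Type*} [Field K] (q : K)

local notation "𝒞" q:max => AdjoinRoot (X ^ 2 - C q)

local notation "𝐯" q:max => AdjoinRoot.root (X ^ 2 - C q)

lemma root_mul_root : 𝐯 q * 𝐯 q = q • (1 : 𝒞 q) := by
  have h := AdjoinRoot.eval₂_root (X ^ 2 - C q)
  simp only [eval₂_sub, eval₂_X_pow, eval₂_C, sub_eq_zero, AdjoinRoot.of] at h
  rw [← pow_two, h, Algebra.smul_def, mul_one]
  rfl

noncomputable def rootBasis : Module.Basis (Fin 2) K (𝒞 q) :=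
  (AdjoinRoot.powerBasis' (monic_X_pow_sub_C q two_ne_zero)).basis.reindex
    (finCongr (by simp))

lemma rootBasis_apply (i : Fin 2) : rootBasis q i = 𝐯 q ^ (i : ℕ) := by
  simp [rootBasis, AdjoinRoot.powerBasis'_gen]

lemma rootBasis_zero : rootBasis q 0 = 1 := by simp [rootBasis_apply]

lemma rootBasis_one : rootBasis q 1 = 𝐯 q := by simp [rootBasis_apply]

lemma exists_eq_smul_one_add_smul_root (d : 𝒞 q) : ∃ a b : K, d = a • 1 + b • 𝐯 q := by
  refine ⟨(rootBasis q).repr d 0, (rootBasis q).repr d 1, ?_⟩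
  conv_lhs => rw [← (rootBasis q).sum_repr d]
  rw [Fin.sum_univ_two, rootBasis_zero, rootBasis_one]

variable {B : Type*} [NonAssocRing B] [Module K B]

lemma uToTensor_apply (a b : B) :
    uToTensor K B q (a, b) = a ⊗ₜ[K] (1 : 𝒞 q) + b ⊗ₜ[K] 𝐯 q := by
  simp [uToTensor]

section Twist

variable {q} {σ : B →ₗ[K] B} {P : 𝒞 q ⊗[K] B →ₗ[K] B ⊗[K] 𝒞 q}

lemma twist_tmul_one (hP1 : ∀ b : B, P ((1 : 𝒞 q) ⊗ₜ[K] b) = b ⊗ₜ[K] 1)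
    (hPv : ∀ b : B, P (𝐯 q ⊗ₜ[K] b) = σ b ⊗ₜ[K] 𝐯 q) (hσone : σ 1 = 1) (d : 𝒞 q) :
    P (d ⊗ₜ[K] (1 : B)) = (1 : B) ⊗ₜ[K] d := by
  obtain ⟨a, b, rfl⟩ := exists_eq_smul_one_add_smul_root q d
  simp only [add_tmul, ← smul_tmul', map_add, map_smul, hP1, hPv, hσone, tmul_add, tmul_smul]

lemma twist_tmul_mul [SMulCommClass K B B] [IsScalarTower K B B]
    (hPv : ∀ b : B, P (𝐯 q ⊗ₜ[K] b) = σ b ⊗ₜ[K] 𝐯 q)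
    (hσmul : ∀ x y : B, σ (x * y) = σ y * σ x) (d : 𝒞 q)
    (hd : d ∈ Submodule.span K {𝐯 q}) (c c' : B) :
    P (d ⊗ₜ[K] (c * c')) = mirrorPc K B (𝒞 q) P c' (P (d ⊗ₜ[K] c)) := by
  obtain ⟨k, rfl⟩ := Submodule.mem_span_singleton.mp hd
  simp only [← smul_tmul', map_smul, hPv, hσmul, mirrorPc_tmul, rTensor_tmul, mulRight_apply]

lemma twist_mul_tmul [SMulCommClass K B B] [IsScalarTower K B B]
    (hP1 : ∀ b : B, P ((1 : 𝒞 q) ⊗ₜ[K] b) = b ⊗ₜ[K] 1)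
    (hPv : ∀ b : B, P (𝐯 q ⊗ₜ[K] b) = σ b ⊗ₜ[K] 𝐯 q)
    (hσinv : ∀ x : B, σ (σ x) = x) (c : B) (d d' : 𝒞 q) :
    P ((d * d') ⊗ₜ[K] c) = mirrorPd K B (𝒞 q) P d (P (d' ⊗ₜ[K] c)) := by
  have h_one : P ((d * 1) ⊗ₜ[K] c) = mirrorPd K B (𝒞 q) P d (P (1 ⊗ₜ[K] c)) := by
    rw [mul_one, hP1, mirrorPd_tmul, mulRight_one, lTensor_id, id_apply]
  have h_root : P ((d * 𝐯 q) ⊗ₜ[K] c) = mirrorPd K B (𝒞 q) P d (P (𝐯 q ⊗ₜ[K] c)) := by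
    rw [hPv, mirrorPd_tmul]
    obtain ⟨a, b, rfl⟩ := exists_eq_smul_one_add_smul_root q d
    simp only [add_mul, smul_mul_assoc, one_mul, root_mul_root, add_tmul, ← smul_tmul', map_add,
      map_smul, hP1, hPv, hσinv, lTensor_tmul, mulRight_apply, tmul_smul]
  obtain ⟨a, b, rfl⟩ := exists_eq_smul_one_add_smul_root q d'
  simp only [mul_add, mul_smul_comm, add_tmul, ← smul_tmul', map_add, map_smul, h_one, h_root]

theorem isMirrorTwistingMap_of_involution [SMulCommClass K B B] [IsScalarTower K B B]
    (hσmul : ∀ x y : B, σ (x * y) = σ y * σ x) (hσone : σ 1 = 1) (hσinv : ∀ x : B, σ (σ x) = x)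
    (hP1 : ∀ b : B, P ((1 : 𝒞 q) ⊗ₜ[K] b) = b ⊗ₜ[K] 1)
    (hPv : ∀ b : B, P (𝐯 q ⊗ₜ[K] b) = σ b ⊗ₜ[K] 𝐯 q) :
    IsMirrorTwistingMap K B (𝒞 q) (Submodule.span K {(𝐯 q : 𝒞 q)}) P :=
  ⟨hP1, twist_tmul_one hP1 hPv hσone, twist_tmul_mul hPv hσmul, twist_mul_tmul hP1 hPv hσinv⟩

lemma uToTensor_uMul [SMulCommClass K B B] [IsScalarTower K B B]
    (hP1 : ∀ b : B, P ((1 : 𝒞 q) ⊗ₜ[K] b) = b ⊗ₜ[K] 1)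
    (hPv : ∀ b : B, P (𝐯 q ⊗ₜ[K] b) = σ b ⊗ₜ[K] 𝐯 q)
    {m : B ⊗[K] 𝒞 q →ₗ[K] B ⊗[K] 𝒞 q →ₗ[K] B ⊗[K] 𝒞 q}
    (hm : IsMirrorMul K B (𝒞 q) (Submodule.span K {(𝐯 q : 𝒞 q)}) P m) (x y : B × B) :
    uToTensor K B q (uMul K B σ q x y) = m (uToTensor K B q x) (uToTensor K B q y) := by
  obtain ⟨a, b⟩ := x
  obtain ⟨c, d⟩ := y
  have hv : 𝐯 q ∈ Submodule.span K {𝐯 q} := Submodule.mem_span_singleton_self _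
  simp only [uToTensor_apply, uMul, map_add, LinearMap.add_apply, hm.1, hm.2 _ hv, hP1, hPv,
    rTensor_tmul, map_tmul, mulLeft_apply, mulRight_apply, one_mul, root_mul_root, tmul_smul,
    add_tmul, ← smul_tmul']
  abel

end Twist

noncomputable def tensorRootBasisEquiv : B ⊗[K] 𝒞 q ≃ₗ[K] B × B :=
  LinearEquiv.lTensor B (rootBasis q).equivFun ≪≫ₗ TensorProduct.piScalarRight K K B (Fin 2) ≪≫ₗ
    LinearEquiv.finTwoArrow K B

lemma tensorRootBasisEquiv_uToTensor (x : B × B) :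
    tensorRootBasisEquiv q (uToTensor K B q x) = x := by
  obtain ⟨a, b⟩ := x
  rw [uToTensor_apply, ← rootBasis_zero, ← rootBasis_one]
  simp [tensorRootBasisEquiv]

lemma uToTensor_bijective : Function.Bijective (uToTensor K B q) :=
  (Function.Bijective.of_comp_iff' (tensorRootBasisEquiv q).bijective _).mp <| by
    convert Function.bijective_id
    exact funext (tensorRootBasisEquiv_uToTensor q)

end QuadraticExtension

theorem stmt7_general (K B : Type*) [Field K]
    [NonAssocRing B] [Module K B] [SMulCommClass K B B] [IsScalarTower K B B]
    (σ : B →ₗ[K] B) (hσmul : ∀ x y : B, σ (x * y) = σ y * σ x)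
    (hσone : σ 1 = 1) (hσinv : ∀ x : B, σ (σ x) = x)
    (q : K)
    (P : (AdjoinRoot (Polynomial.X ^ 2 - Polynomial.C q)) ⊗[K] B →ₗ[K]
         B ⊗[K] (AdjoinRoot (Polynomial.X ^ 2 - Polynomial.C q)))
    (hP1 : ∀ b : B,
      P ((1 : AdjoinRoot (Polynomial.X ^ 2 - Polynomial.C q)) ⊗ₜ[K] b) = b ⊗ₜ[K] 1)
    (hPv : ∀ b : B,
      P ((AdjoinRoot.root (Polynomial.X ^ 2 - Polynomial.C q)) ⊗ₜ[K] b) =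
        σ b ⊗ₜ[K] AdjoinRoot.root (Polynomial.X ^ 2 - Polynomial.C q))
    (m : B ⊗[K] (AdjoinRoot (Polynomial.X ^ 2 - Polynomial.C q)) →ₗ[K]
         B ⊗[K] (AdjoinRoot (Polynomial.X ^ 2 - Polynomial.C q)) →ₗ[K]
         B ⊗[K] (AdjoinRoot (Polynomial.X ^ 2 - Polynomial.C q)))
    (hm : IsMirrorMul K B (AdjoinRoot (Polynomial.X ^ 2 - Polynomial.C q))
      (Submodule.span K {AdjoinRoot.root (Polynomial.X ^ 2 - Polynomial.C q : Polynomial K)}) P m) :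
    IsMirrorTwistingMap K B (AdjoinRoot (Polynomial.X ^ 2 - Polynomial.C q))
      (Submodule.span K {AdjoinRoot.root (Polynomial.X ^ 2 - Polynomial.C q : Polynomial K)}) P ∧
    Function.Bijective (uToTensor K B q) ∧
    uToTensor K B q ((1 : B), (0 : B)) =
      (1 : B) ⊗ₜ[K] (1 : AdjoinRoot (Polynomial.X ^ 2 - Polynomial.C q)) ∧
    (∀ x y : B × B,
      uToTensor K B q (uMul K B σ q x y) = m (uToTensor K B q x) (uToTensor K B q y)) :=
  ⟨isMirrorTwistingMap_of_involution hσmul hσone hσinv hP1 hPv, uToTensor_bijective q,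
    by simp [uToTensor_apply], uToTensor_uMul hP1 hPv hm⟩

/-- the map `P : C(K,q) ⊗ B → B ⊗ C(K,q)` with `P(1⊗b) = b⊗1`,
`P(v⊗b) = σ(b)⊗v` satisfies the mirror conditions (aatm1)–(aatm3), and
`a + bv ↦ a⊗1 + b⊗v` is an isomorphism of unital algebras `B̲(q) ≅ B ⊗̲_P C(K,q)`. -/
theorem stmt7 (K B : Type*) [Field K]
    [NonAssocRing B] [Module K B] [SMulCommClass K B B] [IsScalarTower K B B]
    (σ : B →ₗ[K] B) (hσmul : ∀ x y : B, σ (x * y) = σ y * σ x)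
    (hσone : σ 1 = 1) (hσinv : ∀ x : B, σ (σ x) = x)
    (q : K) (hq : q ≠ 0)
    (P : (AdjoinRoot (Polynomial.X ^ 2 - Polynomial.C q)) ⊗[K] B →ₗ[K]
         B ⊗[K] (AdjoinRoot (Polynomial.X ^ 2 - Polynomial.C q)))
    (hP1 : ∀ b : B,
      P ((1 : AdjoinRoot (Polynomial.X ^ 2 - Polynomial.C q)) ⊗ₜ[K] b) = b ⊗ₜ[K] 1)
    (hPv : ∀ b : B,
      P ((AdjoinRoot.root (Polynomial.X ^ 2 - Polynomial.C q)) ⊗ₜ[K] b) =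
        σ b ⊗ₜ[K] AdjoinRoot.root (Polynomial.X ^ 2 - Polynomial.C q))
    (m : B ⊗[K] (AdjoinRoot (Polynomial.X ^ 2 - Polynomial.C q)) →ₗ[K]
         B ⊗[K] (AdjoinRoot (Polynomial.X ^ 2 - Polynomial.C q)) →ₗ[K]
         B ⊗[K] (AdjoinRoot (Polynomial.X ^ 2 - Polynomial.C q)))
    (hm : IsMirrorMul K B (AdjoinRoot (Polynomial.X ^ 2 - Polynomial.C q))
      (Submodule.span K {AdjoinRoot.root (Polynomial.X ^ 2 - Polynomial.C q : Polynomial K)}) P m) :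
    IsMirrorTwistingMap K B (AdjoinRoot (Polynomial.X ^ 2 - Polynomial.C q))
      (Submodule.span K {AdjoinRoot.root (Polynomial.X ^ 2 - Polynomial.C q : Polynomial K)}) P ∧
    Function.Bijective (uToTensor K B q) ∧
    uToTensor K B q ((1 : B), (0 : B)) =
      (1 : B) ⊗ₜ[K] (1 : AdjoinRoot (Polynomial.X ^ 2 - Polynomial.C q)) ∧
    (∀ x y : B × B,
      uToTensor K B q (uMul K B σ q x y) = m (uToTensor K B q x) (uToTensor K B q y)) :=
  stmt7_general K B σ hσmul hσone hσinv q P hP1 hPv m hm
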